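/- arXiv:1609.08390 — 2 statements merged into one kernel-verified Lean document; each statement's English description precedes it below -/
import Mathlib

section
/- Let φ : ℕ → ℝ with φ(0) = 0 and φ(x) > 0 for x ≥ 1, let μ be a probability measure on (0,∞) such that Z_s < ∞ for μ-almost every s and ∫ s dμ(s) < ∞, and let λ > 0 with Z_λ < ∞. Define the mixture m(x) = ∫ I_φ(s)(x) dμ(s). Let f : ℕ → ℝ be integrable with respect to I_φ(λ), with respect to I_φ(s) for μ-almost every s, and with respect to m, and let g : ℕ → ℝ be a bounded solution of the Stein equation for f with respect to I_φ(λ). Then |Σ_x f(x) m(x) − Σ_x f(x) I_φ(λ)(x)| ≤ (∫ |λ − s| dμ(s)) · sup_{x ∈ ℕ} |g(x)|. -/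
/-!
For a fixed mixing parameter `s > 0`, the law `I_φ(s)` satisfies the detailed-balance relation
`φ(x+1) I_φ(s)(x+1) = s I_φ(s)(x)`, so summing the Stein equation against `I_φ(s)` gives
`Σ f dI_φ(s) − Σ f dI_φ(λ) = (λ − s) Σ g(x+1) I_φ(s)(x)`, which is at most `|λ − s| · sup |g|`
in absolute value. Integrating this bound in `s` against `μ`, after exchanging the sum over `x`
with the integral (Fubini, justified by the `m`-integrability of `f`), gives the theorem.
-/

open MeasureTheory
open scoped BigOperators

/-- The product `φ(1)⋯φ(x)` (empty product equal to `1`). -/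
noncomputable def phiProd (φ : ℕ → ℝ) (x : ℕ) : ℝ := ∏ i ∈ Finset.range x, φ (i + 1)

/-- Normalizing constant `Z_λ = Σ_{x≥0} λ^x / (φ(1)⋯φ(x))`. -/
noncomputable def Zphi (φ : ℕ → ℝ) (lam : ℝ) : ℝ := ∑' x : ℕ, lam ^ x / phiProd φ x

/-- The probability measure `I_φ(λ)(x) = Z_λ⁻¹ λ^x / (φ(1)⋯φ(x))`. -/
noncomputable def Iphi (φ : ℕ → ℝ) (lam : ℝ) (x : ℕ) : ℝ :=
  (lam ^ x / phiProd φ x) / Zphi φ lam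

open Filter

section Iphi

variable {φ : ℕ → ℝ} {s : ℝ}

lemma phiProd_pos (hφ : ∀ x : ℕ, 1 ≤ x → 0 < φ x) (x : ℕ) : 0 < phiProd φ x :=
  Finset.prod_pos fun i _ => hφ (i + 1) (by omega)

lemma phiProd_succ (x : ℕ) : phiProd φ (x + 1) = phiProd φ x * φ (x + 1) :=
  Finset.prod_range_succ _ _

lemma pow_div_phiProd_nonneg (hφ : ∀ x : ℕ, 1 ≤ x → 0 < φ x) (hs : 0 ≤ s) (x : ℕ) :
    0 ≤ s ^ x / phiProd φ x :=
  div_nonneg (pow_nonneg hs x) (phiProd_pos hφ x).le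

lemma pow_div_phiProd_le_Zphi (hφ : ∀ x : ℕ, 1 ≤ x → 0 < φ x) (hs : 0 ≤ s)
    (hZ : Summable fun x : ℕ => s ^ x / phiProd φ x) (x : ℕ) :
    s ^ x / phiProd φ x ≤ Zphi φ s :=
  hZ.le_tsum x fun y _ => pow_div_phiProd_nonneg hφ hs y

lemma one_le_Zphi (hφ : ∀ x : ℕ, 1 ≤ x → 0 < φ x) (hs : 0 ≤ s)
    (hZ : Summable fun x : ℕ => s ^ x / phiProd φ x) : 1 ≤ Zphi φ s := by
  simpa [phiProd] using pow_div_phiProd_le_Zphi hφ hs hZ 0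

lemma Iphi_nonneg (hφ : ∀ x : ℕ, 1 ≤ x → 0 < φ x) (hs : 0 ≤ s) (x : ℕ) : 0 ≤ Iphi φ s x :=
  div_nonneg (pow_div_phiProd_nonneg hφ hs x) (tsum_nonneg (pow_div_phiProd_nonneg hφ hs))

lemma Iphi_le_one (hφ : ∀ x : ℕ, 1 ≤ x → 0 < φ x) (hs : 0 ≤ s)
    (hZ : Summable fun x : ℕ => s ^ x / phiProd φ x) (x : ℕ) : Iphi φ s x ≤ 1 :=
  (div_le_one (zero_lt_one.trans_le (one_le_Zphi hφ hs hZ))).2 (pow_div_phiProd_le_Zphi hφ hs hZ x)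

lemma hasSum_Iphi (hφ : ∀ x : ℕ, 1 ≤ x → 0 < φ x) (hs : 0 ≤ s)
    (hZ : Summable fun x : ℕ => s ^ x / phiProd φ x) : HasSum (Iphi φ s) 1 := by
  have hZ0 : Zphi φ s ≠ 0 := (zero_lt_one.trans_le (one_le_Zphi hφ hs hZ)).ne'
  have h := hZ.hasSum.div_const (Zphi φ s)
  rwa [← Zphi, div_self hZ0] at h

lemma Iphi_succ (hφ : ∀ x : ℕ, 1 ≤ x → 0 < φ x) (s : ℝ) (x : ℕ) :
    φ (x + 1) * Iphi φ s (x + 1) = s * Iphi φ s x := by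
  have hφx : φ (x + 1) ≠ 0 := (hφ (x + 1) (by omega)).ne'
  have hp : phiProd φ x ≠ 0 := (phiProd_pos hφ x).ne'
  rw [Iphi, Iphi, phiProd_succ, pow_succ]
  field_simp

end Iphi

lemma norm_mul_le_of_abs_le {p h : ℕ → ℝ} {C : ℝ} (hp : ∀ x, 0 ≤ p x) (hC : ∀ x, |h x| ≤ C)
    (x : ℕ) : ‖h x * p x‖ ≤ C * p x := by
  rw [Real.norm_eq_abs, abs_mul, abs_of_nonneg (hp x)]
  exact mul_le_mul_of_nonneg_right (hC x) (hp x)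

lemma summable_mul_of_abs_le {p h : ℕ → ℝ} {C : ℝ} (hp : ∀ x, 0 ≤ p x) (hps : Summable p)
    (hC : ∀ x, |h x| ≤ C) : Summable fun x => h x * p x :=
  .of_norm_bounded (hps.mul_left C) (norm_mul_le_of_abs_le hp hC)

lemma abs_tsum_mul_le_of_hasSum_one {p h : ℕ → ℝ} {C : ℝ} (hp : ∀ x, 0 ≤ p x)
    (hp1 : HasSum p 1) (hC : ∀ x, |h x| ≤ C) : |∑' x, h x * p x| ≤ C := by
  have hCp : HasSum (fun x => C * p x) C := by simpa using hp1.mul_left C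
  simpa [hCp.tsum_eq] using tsum_of_norm_bounded hCp (norm_mul_le_of_abs_le hp hC)

section Stein

variable {φ : ℕ → ℝ} {s : ℝ}

lemma tsum_stein_mul_Iphi (hφ0 : φ 0 = 0) (hφ : ∀ x : ℕ, 1 ≤ x → 0 < φ x) (hs : 0 ≤ s)
    (hZ : Summable fun x : ℕ => s ^ x / phiProd φ x) {g : ℕ → ℝ} {C : ℝ}
    (hC : ∀ x, |g x| ≤ C) (lam : ℝ) :
    ∑' x, (lam * g (x + 1) - φ x * g x) * Iphi φ s x
      = (lam - s) * ∑' x, g (x + 1) * Iphi φ s x := by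
  set S := ∑' x, g (x + 1) * Iphi φ s x
  have hS : Summable fun x => g (x + 1) * Iphi φ s x :=
    summable_mul_of_abs_le (Iphi_nonneg hφ hs) (hasSum_Iphi hφ hs hZ).summable fun x => hC (x + 1)
  have hshift : HasSum (fun x => φ x * g x * Iphi φ s x) (s * S) := by
    rw [← hasSum_nat_add_iff' 1]
    have hterm : ∀ x, φ (x + 1) * g (x + 1) * Iphi φ s (x + 1) = s * (g (x + 1) * Iphi φ s x) :=
      fun x => by linear_combination g (x + 1) * Iphi_succ hφ s x
    simpa [hφ0, hterm] using hS.hasSum.mul_left s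
  calc ∑' x, (lam * g (x + 1) - φ x * g x) * Iphi φ s x = lam * S - s * S := by
        refine HasSum.tsum_eq ?_
        simpa only [sub_mul, mul_assoc] using (hS.hasSum.mul_left lam).sub hshift
    _ = (lam - s) * S := by ring

lemma abs_tsum_mul_Iphi_sub_le (hφ0 : φ 0 = 0) (hφ : ∀ x : ℕ, 1 ≤ x → 0 < φ x) (hs : 0 ≤ s)
    (hZ : Summable fun x : ℕ => s ^ x / phiProd φ x) {f g : ℕ → ℝ} {lam B C : ℝ}
    (hg : ∀ x, lam * g (x + 1) - φ x * g x = f x - B) (hC : ∀ x, |g x| ≤ C)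
    (hf : Summable fun x => f x * Iphi φ s x) :
    |∑' x, f x * Iphi φ s x - B| ≤ |lam - s| * C := by
  have hI := hasSum_Iphi hφ hs hZ
  have hcentered : ∑' x, f x * Iphi φ s x - B = ∑' x, (f x - B) * Iphi φ s x := by
    refine (HasSum.tsum_eq ?_).symm
    simpa [sub_mul] using hf.hasSum.sub (hI.mul_left B)
  simp_rw [hcentered, ← hg, tsum_stein_mul_Iphi hφ0 hφ hs hZ hC lam, abs_mul]
  exact mul_le_mul_of_nonneg_left
    (abs_tsum_mul_le_of_hasSum_one (Iphi_nonneg hφ hs) hI fun x => hC (x + 1)) (abs_nonneg _)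

end Stein

lemma aestronglyMeasurable_tsum_of_ae_summable {α E : Type*} [MeasurableSpace α]
    {μ : Measure α} [NormedAddCommGroup E] {F : ℕ → α → E}
    (hF : ∀ n, AEStronglyMeasurable (F n) μ) (hsum : ∀ᵐ a ∂μ, Summable fun n => F n a) :
    AEStronglyMeasurable (fun a => ∑' n, F n a) μ :=
  aestronglyMeasurable_of_tendsto_ae atTop
    (fun N => Finset.aestronglyMeasurable_fun_sum (Finset.range N) fun n _ => hF n)
    (hsum.mono fun _ h => h.hasSum.tendsto_sum_nat)

section Mixture

variable {φ : ℕ → ℝ} {μ : Measure ℝ}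

lemma aestronglyMeasurable_Iphi (hZ : ∀ᵐ s ∂μ, Summable fun x : ℕ => s ^ x / phiProd φ x)
    (x : ℕ) : AEStronglyMeasurable (fun s => Iphi φ s x) μ := by
  have hweight : ∀ y : ℕ, AEStronglyMeasurable (fun s : ℝ => s ^ y / phiProd φ y) μ :=
    fun y => ((measurable_id.pow_const y).div_const _).aestronglyMeasurable
  exact (hweight x).div₀ (aestronglyMeasurable_tsum_of_ae_summable hweight hZ)

lemma integrable_Iphi [IsFiniteMeasure μ] (hφ : ∀ x : ℕ, 1 ≤ x → 0 < φ x)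
    (hμ : ∀ᵐ s ∂μ, 0 ≤ s) (hZ : ∀ᵐ s ∂μ, Summable fun x : ℕ => s ^ x / phiProd φ x) (x : ℕ) :
    Integrable (fun s => Iphi φ s x) μ := by
  refine .of_bound (aestronglyMeasurable_Iphi hZ x) 1 ?_
  filter_upwards [hμ, hZ] with s hs hZs
  rw [Real.norm_of_nonneg (Iphi_nonneg hφ hs x)]
  exact Iphi_le_one hφ hs hZs x

lemma integral_tsum_mul_Iphi [IsFiniteMeasure μ] (hφ : ∀ x : ℕ, 1 ≤ x → 0 < φ x)
    (hμ : ∀ᵐ s ∂μ, 0 ≤ s) (hZ : ∀ᵐ s ∂μ, Summable fun x : ℕ => s ^ x / phiProd φ x)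
    {f : ℕ → ℝ} (hfm : Summable fun x => |f x| * ∫ s, Iphi φ s x ∂μ) :
    ∫ s, ∑' x, f x * Iphi φ s x ∂μ = ∑' x, f x * ∫ s, Iphi φ s x ∂μ := by
  have hnorm : ∀ x, ∫ s, ‖f x * Iphi φ s x‖ ∂μ = |f x| * ∫ s, Iphi φ s x ∂μ := fun x => by
    rw [← integral_const_mul]
    refine integral_congr_ae ?_
    filter_upwards [hμ] with s hs
    rw [Real.norm_eq_abs, abs_mul, abs_of_nonneg (Iphi_nonneg hφ hs x)]
  rw [← integral_tsum_of_summable_integral_norm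
    (fun x => (integrable_Iphi hφ hμ hZ x).const_mul (f x)) (by simpa only [hnorm] using hfm)]
  exact tsum_congr fun x => integral_const_mul _ _

end Mixture

theorem Iphi_mixture_biased_general (φ : ℕ → ℝ) (hφ0 : φ 0 = 0)
    (hφ : ∀ x : ℕ, 1 ≤ x → 0 < φ x)
    (μ : Measure ℝ) [IsProbabilityMeasure μ]
    (hμpos : ∀ᵐ s ∂μ, 0 < s)
    (hZae : ∀ᵐ s ∂μ, Summable fun x : ℕ => s ^ x / phiProd φ x)
    (hμint : Integrable (fun s : ℝ => s) μ)
    (lam : ℝ)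
    (m : ℕ → ℝ) (hm : ∀ x : ℕ, m x = ∫ s, Iphi φ s x ∂μ)
    (f : ℕ → ℝ)
    (hfs : ∀ᵐ s ∂μ, Summable fun x : ℕ => |f x| * Iphi φ s x)
    (hfm : Summable fun x : ℕ => |f x| * m x)
    (g : ℕ → ℝ)
    (hg : ∀ x : ℕ, lam * g (x + 1) - φ x * g x = f x - ∑' y : ℕ, f y * Iphi φ lam y)
    (hgbd : BddAbove (Set.range fun x : ℕ => |g x|)) :
    |(∑' x : ℕ, f x * m x) - ∑' x : ℕ, f x * Iphi φ lam x| ≤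
      (∫ s, |lam - s| ∂μ) * ⨆ x : ℕ, |g x| := by
  obtain rfl : m = fun x => ∫ s, Iphi φ s x ∂μ := funext hm
  set B := ∑' y : ℕ, f y * Iphi φ lam y
  set C := ⨆ x : ℕ, |g x|
  have hμ : ∀ᵐ s ∂μ, 0 ≤ s := hμpos.mono fun _ hs => hs.le
  have hsummable : ∀ᵐ s ∂μ, Summable fun x => f x * Iphi φ s x := by
    filter_upwards [hμ, hfs] with s hs hfs
    exact .of_norm (by simpa [abs_mul, abs_of_nonneg (Iphi_nonneg hφ hs _)] using hfs)
  have hbound : ∀ᵐ s ∂μ, ‖∑' x, f x * Iphi φ s x - B‖ ≤ |lam - s| * C := by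
    filter_upwards [hμ, hZae, hsummable] with s hs hZs hfs
    exact abs_tsum_mul_Iphi_sub_le hφ0 hφ hs hZs hg (fun x => le_ciSup hgbd x) hfs
  have hdist : Integrable (fun s => |lam - s| * C) μ :=
    ((integrable_const lam).sub hμint).abs.mul_const C
  have hT : Integrable (fun s => ∑' x, f x * Iphi φ s x) μ := by
    have hmeas := aestronglyMeasurable_tsum_of_ae_summable
      (fun x => (aestronglyMeasurable_Iphi hZae x).const_mul (f x)) hsummable
    exact ((hdist.mono' (hmeas.sub aestronglyMeasurable_const) hbound).add
      (integrable_const B)).congr (ae_of_all _ fun s => sub_add_cancel _ B)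
  calc |(∑' x, f x * ∫ s, Iphi φ s x ∂μ) - B|
      = ‖∫ s, (∑' x, f x * Iphi φ s x - B) ∂μ‖ := by
        rw [integral_sub hT (integrable_const B), integral_tsum_mul_Iphi hφ hμ hZae hfm,
          integral_const, probReal_univ, one_smul, Real.norm_eq_abs]
    _ ≤ ∫ s, |lam - s| * C ∂μ := norm_integral_le_of_norm_le hdist hbound
    _ = (∫ s, |lam - s| ∂μ) * C := integral_mul_const _ _

/-- Biased approximation of mixed `I_φ(λ)` laws: if `m` is the μ-mixture of the laws
`I_φ(s)` and `g` is a bounded solution of the Stein equation for `f` with respect to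
`I_φ(λ)`, then `|Σ f dm − Σ f dI_φ(λ)| ≤ (∫ |λ − s| dμ) · sup_x |g(x)|`. -/
theorem Iphi_mixture_biased (φ : ℕ → ℝ) (hφ0 : φ 0 = 0)
    (hφ : ∀ x : ℕ, 1 ≤ x → 0 < φ x)
    (μ : Measure ℝ) [IsProbabilityMeasure μ]
    (hμpos : ∀ᵐ s ∂μ, 0 < s)
    (hZae : ∀ᵐ s ∂μ, Summable fun x : ℕ => s ^ x / phiProd φ x)
    (hμint : Integrable (fun s : ℝ => s) μ)
    (lam : ℝ) (hlam : 0 < lam)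
    (hZ : Summable fun x : ℕ => lam ^ x / phiProd φ x)
    (m : ℕ → ℝ) (hm : ∀ x : ℕ, m x = ∫ s, Iphi φ s x ∂μ)
    (f : ℕ → ℝ)
    (hf : Summable fun x : ℕ => |f x| * Iphi φ lam x)
    (hfs : ∀ᵐ s ∂μ, Summable fun x : ℕ => |f x| * Iphi φ s x)
    (hfm : Summable fun x : ℕ => |f x| * m x)
    (g : ℕ → ℝ)
    (hg : ∀ x : ℕ, lam * g (x + 1) - φ x * g x = f x - ∑' y : ℕ, f y * Iphi φ lam y)
    (hgbd : BddAbove (Set.range fun x : ℕ => |g x|)) :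
    |(∑' x : ℕ, f x * m x) - ∑' x : ℕ, f x * Iphi φ lam x| ≤
      (∫ s, |lam - s| ∂μ) * ⨆ x : ℕ, |g x| :=
  Iphi_mixture_biased_general φ hφ0 hφ μ hμpos hZae hμint lam m hm f hfs hfm g hg hgbd
end

section
/- In the birth-death setting, assume α(x) − α(x+1) + β(x+1) − β(x) ≥ 0 for all x ∈ ℕ. Let u : ℕ → (0,∞), define d_u(x,y) = Σ_{k = min(x,y)}^{max(x,y)−1} u(k), fix i ≥ 1, and assume Σ_{j ∈ ℕ} d_u(i,j) π(j) < ∞. For f : ℕ → ℝ with |f(x+1) − f(x)| ≤ u(x) for all x ∈ ℕ, set g_f(i) = Σ_{j ∈ ℕ} f(j) g_j(i) (the series converges absolutely for such f). Then sup{ |g_f(i+1) − g_f(i)| : f with |f(x+1) − f(x)| ≤ u(x) for all x } = |g_{φ_i}(i+1) − g_{φ_i}(i)|, where φ_i(j) = −d_u(i,j). -/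
/-!
Put `c j = g_j(i+1) - g_j(i)`. Detailed balance `α(x)π(x) = β(x+1)π(x+1)` gives `∑_j g_j(m) = 0`
for `m ≥ 1`, hence `∑_j c_j = 0`. The monotonicity condition says that `β - α` is nondecreasing;
summing it against `π` shows that `e⁺` is nondecreasing and `e⁻` nonincreasing, so `c_j ≤ 0` for
`j ≠ i`. Therefore `g_f(i+1) - g_f(i) = ∑_j (f(j) - f(i)) c_j`, whose absolute value is at most
`∑_j d_u(i,j) (-c_j)`, and this bound is the value at `f = φ_i = -d_u(i, ·)`.
-/

open scoped BigOperators

/-- `w(x) = ∏_{y=1}^x α(y−1)/β(y)` (empty product equal to `1`). -/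
noncomputable def bdW (a b : ℕ → ℝ) (x : ℕ) : ℝ := ∏ y ∈ Finset.range x, a y / b (y + 1)

/-- The invariant probability measure `π` of the birth-death process:
`π(x) = π(0) ∏_{y=1}^x α(y−1)/β(y)` with `π(0) = (Σ_{x≥0} w(x))⁻¹`. -/
noncomputable def bdPi (a b : ℕ → ℝ) (x : ℕ) : ℝ := bdW a b x / ∑' y : ℕ, bdW a b y

/-- `e_i^+ = (Σ_{k=0}^i π(k)) / (α(i) π(i))`. -/
noncomputable def ePlus (a b : ℕ → ℝ) (i : ℕ) : ℝ :=
  (∑ k ∈ Finset.range (i + 1), bdPi a b k) / (a i * bdPi a b i)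

/-- `e_i^- = (Σ_{k=i}^∞ π(k)) / (β(i) π(i))`. -/
noncomputable def eMinus (a b : ℕ → ℝ) (i : ℕ) : ℝ :=
  (∑' k : ℕ, bdPi a b (i + k)) / (b i * bdPi a b i)

/-- `g_j(0) = 0` and `g_j(i) = π(j)(−e_{i−1}^+ 1_{i≤j} + e_i^- 1_{i≥j+1})` for `i ≥ 1`. -/
noncomputable def gBD (a b : ℕ → ℝ) (j i : ℕ) : ℝ :=
  if i = 0 then 0
  else bdPi a b j *
    ((if i ≤ j then -ePlus a b (i - 1) else 0) + (if j + 1 ≤ i then eMinus a b i else 0))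

section BirthDeath

variable {a b : ℕ → ℝ}

lemma bdW_pos (ha : ∀ x : ℕ, 0 < a x) (hb : ∀ x : ℕ, 1 ≤ x → 0 < b x) (x : ℕ) :
    0 < bdW a b x :=
  Finset.prod_pos fun y _ => div_pos (ha y) (hb (y + 1) y.succ_pos)

lemma bdPi_pos (ha : ∀ x : ℕ, 0 < a x) (hb : ∀ x : ℕ, 1 ≤ x → 0 < b x)
    (hw : Summable (bdW a b)) (x : ℕ) : 0 < bdPi a b x := by
  have hW := bdW_pos ha hb
  exact div_pos (hW x) (hw.tsum_pos (fun y => (hW y).le) 0 (hW 0))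

lemma summable_bdPi (hw : Summable (bdW a b)) : Summable (bdPi a b) := hw.div_const _

lemma detailed_balance (hb : ∀ x : ℕ, 1 ≤ x → 0 < b x) (x : ℕ) :
    a x * bdPi a b x = b (x + 1) * bdPi a b (x + 1) := by
  have hbx : b (x + 1) ≠ 0 := (hb (x + 1) x.succ_pos).ne'
  simp only [bdPi, bdW, Finset.prod_range_succ]
  field_simp

lemma sum_range_flux (hb : ∀ x : ℕ, 1 ≤ x → 0 < b x) (m n : ℕ) :
    ∑ k ∈ Finset.range n, bdPi a b (m + k + 1) * (a (m + k + 1) - b (m + k + 1)) =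
      a (m + n) * bdPi a b (m + n) - a m * bdPi a b m := by
  have htele := Finset.sum_range_sub (fun k => a (m + k) * bdPi a b (m + k)) n
  rw [add_zero] at htele
  rw [← htele]
  refine Finset.sum_congr rfl fun k _ => ?_
  rw [← add_assoc, detailed_balance hb (m + k)]
  ring

lemma sum_range_mul_sub_eq (hb0 : b 0 = 0) (hb : ∀ x : ℕ, 1 ≤ x → 0 < b x) (i : ℕ) :
    ∑ k ∈ Finset.range (i + 1), bdPi a b k * (a k - b k) = a i * bdPi a b i := by
  rw [Finset.sum_range_succ']
  have := sum_range_flux (a := a) hb 0 i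
  simp only [zero_add] at this
  rw [this, hb0]
  ring

lemma monotone_death_sub_birth (hmono : ∀ x : ℕ, 0 ≤ a x - a (x + 1) + b (x + 1) - b x) :
    Monotone fun x => b x - a x :=
  monotone_nat_of_le_succ fun n => by linarith [hmono n]

lemma ePlus_le_ePlus_succ (ha : ∀ x : ℕ, 0 < a x) (hb0 : b 0 = 0)
    (hb : ∀ x : ℕ, 1 ≤ x → 0 < b x) (hπ : ∀ x, 0 < bdPi a b x)
    (hmono : ∀ x : ℕ, 0 ≤ a x - a (x + 1) + b (x + 1) - b x) (i : ℕ) :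
    ePlus a b i ≤ ePlus a b (i + 1) := by
  rw [ePlus, ePlus, Finset.sum_range_succ _ (i + 1),
    div_le_div_iff₀ (mul_pos (ha i) (hπ i)) (mul_pos (ha (i + 1)) (hπ (i + 1)))]
  set F := ∑ k ∈ Finset.range (i + 1), bdPi a b k
  have hflux : F * (a (i + 1) - b (i + 1)) ≤ a i * bdPi a b i := by
    rw [← sum_range_mul_sub_eq hb0 hb i, Finset.sum_mul]
    refine Finset.sum_le_sum fun k hk => mul_le_mul_of_nonneg_left ?_ (hπ k).le
    have := monotone_death_sub_birth hmono (show k ≤ i + 1 by simp at hk; omega)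
    linarith
  linear_combination mul_le_mul_of_nonneg_left hflux (hπ (i + 1)).le +
      - F * detailed_balance (a := a) hb i

lemma eMinus_succ_le_eMinus (ha : ∀ x : ℕ, 0 < a x) (hb : ∀ x : ℕ, 1 ≤ x → 0 < b x)
    (hw : Summable (bdW a b)) (hπ : ∀ x, 0 < bdPi a b x)
    (hmono : ∀ x : ℕ, 0 ≤ a x - a (x + 1) + b (x + 1) - b x) {i : ℕ} (hi : 1 ≤ i) :
    eMinus a b (i + 1) ≤ eMinus a b i := by
  have htail : Summable fun k => bdPi a b (i + k + 1) :=
    (summable_nat_add_iff (i + 1)).2 (summable_bdPi hw) |>.congr fun k => by ring_nf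
  set G := ∑' k, bdPi a b (i + k + 1)
  have hflux : -(a i * bdPi a b i) ≤ (a i - b i) * G := by
    refine ge_of_tendsto' (htail.hasSum.mul_left (a i - b i)).tendsto_sum_nat fun N => ?_
    calc -(a i * bdPi a b i)
        ≤ a (i + N) * bdPi a b (i + N) - a i * bdPi a b i := by
          nlinarith [mul_pos (ha (i + N)) (hπ (i + N))]
      _ = ∑ k ∈ Finset.range N, bdPi a b (i + k + 1) * (a (i + k + 1) - b (i + k + 1)) :=
          (sum_range_flux hb i N).symm
      _ ≤ ∑ k ∈ Finset.range N, (a i - b i) * bdPi a b (i + k + 1) := by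
          refine Finset.sum_le_sum fun k _ => ?_
          rw [mul_comm]
          refine mul_le_mul_of_nonneg_right ?_ (hπ _).le
          linarith [monotone_death_sub_birth hmono (show i ≤ i + k + 1 by omega)]
  have hsplit : ∑' k, bdPi a b (i + k) = bdPi a b i + G := by
    exact ((summable_nat_add_iff i).2 (summable_bdPi hw) |>.congr fun k => by
      rw [add_comm]).tsum_eq_zero_add
  have hshift : ∑' k, bdPi a b (i + 1 + k) = G := tsum_congr fun k => by rw [add_right_comm]
  rw [eMinus, eMinus, hsplit, hshift,
    div_le_div_iff₀ (mul_pos (hb (i + 1) (by omega)) (hπ (i + 1))) (mul_pos (hb i hi) (hπ i)),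
    ← detailed_balance hb i]
  linear_combination mul_le_mul_of_nonneg_left hflux (hπ i).le

lemma gBD_of_lt {j m : ℕ} (h : j < m) : gBD a b j m = bdPi a b j * eMinus a b m := by
  rw [gBD, if_neg (by omega), if_neg (by omega), if_pos (by omega), zero_add]

lemma gBD_of_le {j m : ℕ} (hm : m ≠ 0) (h : m ≤ j) :
    gBD a b j m = -(bdPi a b j * ePlus a b (m - 1)) := by
  rw [gBD, if_neg hm, if_pos h, if_neg (by omega), add_zero, mul_neg]

lemma abs_gBD_le (hπ : ∀ x, 0 ≤ bdPi a b x) (j m : ℕ) :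
    |gBD a b j m| ≤ (|ePlus a b (m - 1)| + |eMinus a b m|) * bdPi a b j := by
  have hC : 0 ≤ |ePlus a b (m - 1)| + |eMinus a b m| := by positivity
  rcases eq_or_ne m 0 with rfl | hm
  · simpa [gBD] using mul_nonneg hC (hπ j)
  rcases lt_or_ge j m with h | h
  · rw [gBD_of_lt h, abs_mul, abs_of_nonneg (hπ j), mul_comm]
    exact mul_le_mul_of_nonneg_right (le_add_of_nonneg_left (abs_nonneg _)) (hπ j)
  · rw [gBD_of_le hm h, abs_neg, abs_mul, abs_of_nonneg (hπ j), mul_comm]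
    exact mul_le_mul_of_nonneg_right (le_add_of_nonneg_right (abs_nonneg _)) (hπ j)

lemma summable_gBD (hπ : ∀ x, 0 ≤ bdPi a b x) (hw : Summable (bdW a b)) (m : ℕ) :
    Summable fun j => gBD a b j m :=
  .of_norm_bounded ((summable_bdPi hw).mul_left _) fun j => abs_gBD_le hπ j m

lemma summable_abs_mul_gBD (hπ : ∀ x, 0 ≤ bdPi a b x) (hw : Summable (bdW a b))
    {f d : ℕ → ℝ} {i : ℕ} (hf : ∀ j, |f j - f i| ≤ d j)
    (hd : Summable fun j => d j * bdPi a b j) (m : ℕ) :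
    Summable fun j => |f j * gBD a b j m| := by
  set C := |ePlus a b (m - 1)| + |eMinus a b m|
  refine .of_nonneg_of_le (fun j => abs_nonneg _) (fun j => ?_)
    (((summable_bdPi hw).mul_left |f i|).add hd |>.mul_right C)
  have hfj : |f j| ≤ |f i| + d j := by linarith [abs_sub_abs_le_abs_sub (f j) (f i), hf j]
  calc |f j * gBD a b j m| = |f j| * |gBD a b j m| := abs_mul _ _
    _ ≤ (|f i| + d j) * (C * bdPi a b j) :=
        mul_le_mul hfj (abs_gBD_le hπ j m) (abs_nonneg _) ((abs_nonneg _).trans hfj)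
    _ = (|f i| * bdPi a b j + d j * bdPi a b j) * C := by ring

/-- By detailed balance, the parts `j < i` and `j ≥ i` both have absolute value
`π([0, i)) π([i, ∞)) / (β(i) π(i))`. -/
lemma tsum_gBD_eq_zero (hb : ∀ x : ℕ, 1 ≤ x → 0 < b x) (hπ : ∀ x, 0 ≤ bdPi a b x)
    (hw : Summable (bdW a b)) {i : ℕ} (hi : 1 ≤ i) : ∑' j, gBD a b j i = 0 := by
  obtain ⟨n, rfl⟩ : ∃ n, i = n + 1 := ⟨i - 1, by omega⟩
  rw [← (summable_gBD hπ hw (n + 1)).sum_add_tsum_nat_add (n + 1),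
    Finset.sum_congr rfl fun j hj => gBD_of_lt (Finset.mem_range.1 hj),
    tsum_congr fun k => gBD_of_le (Nat.add_one_ne_zero n) (Nat.le_add_left _ k),
    ← Finset.sum_mul, tsum_neg, tsum_mul_right, eMinus, ePlus, ← detailed_balance hb n,
    tsum_congr fun k => congrArg (bdPi a b) (add_comm k (n + 1)), Nat.add_sub_cancel]
  ring

lemma gBD_succ_le_gBD (ha : ∀ x : ℕ, 0 < a x) (hb0 : b 0 = 0)
    (hb : ∀ x : ℕ, 1 ≤ x → 0 < b x) (hw : Summable (bdW a b))
    (hmono : ∀ x : ℕ, 0 ≤ a x - a (x + 1) + b (x + 1) - b x) {i j : ℕ} (hi : 1 ≤ i)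
    (hj : j ≠ i) : gBD a b j (i + 1) ≤ gBD a b j i := by
  have hπ := bdPi_pos ha hb hw
  rcases hj.lt_or_gt with h | h
  · rw [gBD_of_lt (by omega), gBD_of_lt h]
    exact mul_le_mul_of_nonneg_left (eMinus_succ_le_eMinus ha hb hw hπ hmono hi) (hπ j).le
  · have hplus := ePlus_le_ePlus_succ ha hb0 hb hπ hmono (i - 1)
    rw [Nat.sub_add_cancel hi] at hplus
    rw [gBD_of_le (m := i + 1) (by omega) h, gBD_of_le (by omega) h.le, Nat.add_sub_cancel]
    exact neg_le_neg (mul_le_mul_of_nonneg_left hplus (hπ j).le)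

end BirthDeath

def pathDist (u : ℕ → ℝ) (x y : ℕ) : ℝ := ∑ k ∈ Finset.Ico (min x y) (max x y), u k

section PathDist

variable {u : ℕ → ℝ}

@[simp]
lemma pathDist_self (x : ℕ) : pathDist u x x = 0 := by simp [pathDist]

lemma pathDist_eq_abs_sub (hu : ∀ x, 0 ≤ u x) (x y : ℕ) :
    pathDist u x y = |∑ k ∈ Finset.range y, u k - ∑ k ∈ Finset.range x, u k| := by
  have hIco : ∀ m n, m ≤ n → ∑ k ∈ Finset.Ico m n, u k =
      |∑ k ∈ Finset.range n, u k - ∑ k ∈ Finset.range m, u k| := fun m n h => by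
    rw [← Finset.sum_Ico_eq_sub _ h, abs_of_nonneg (Finset.sum_nonneg fun k _ => hu k)]
  rcases le_total x y with h | h
  · rw [pathDist, min_eq_left h, max_eq_right h, hIco x y h]
  · rw [pathDist, min_eq_right h, max_eq_left h, hIco y x h, abs_sub_comm]

lemma abs_sub_le_pathDist {f : ℕ → ℝ} (hf : ∀ x, |f (x + 1) - f x| ≤ u x) (x y : ℕ) :
    |f y - f x| ≤ pathDist u x y := by
  have hIco : ∀ m n, m ≤ n → dist (f m) (f n) ≤ ∑ k ∈ Finset.Ico m n, u k := fun m n h =>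
    dist_le_Ico_sum_of_dist_le h fun {k} _ _ => by rw [dist_comm, Real.dist_eq]; exact hf k
  rcases le_total x y with h | h
  · rw [pathDist, min_eq_left h, max_eq_right h, ← Real.dist_eq, dist_comm]
    exact hIco x y h
  · rw [pathDist, min_eq_right h, max_eq_left h, ← Real.dist_eq]
    exact hIco y x h

lemma abs_neg_pathDist_succ_sub_le (hu : ∀ x, 0 ≤ u x) (i x : ℕ) :
    |-pathDist u i (x + 1) - -pathDist u i x| ≤ u x := by
  rw [pathDist_eq_abs_sub hu, pathDist_eq_abs_sub hu, neg_sub_neg, Finset.sum_range_succ]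
  calc _ ≤ |(∑ k ∈ Finset.range x, u k - ∑ k ∈ Finset.range i, u k) -
          (∑ k ∈ Finset.range x, u k + u x - ∑ k ∈ Finset.range i, u k)| :=
        abs_abs_sub_abs_le_abs_sub _ _
    _ = u x := by
        rw [sub_sub_sub_cancel_right, sub_add_cancel_left, abs_neg, abs_of_nonneg (hu x)]

end PathDist

lemma abs_tsum_mul_le_of_tsum_eq_zero {ι : Type*} {c f d : ι → ℝ} {i : ι} (hc : Summable c)
    (hc0 : ∑' j, c j = 0) (hneg : ∀ j, j ≠ i → c j ≤ 0) (hf : ∀ j, |f j - f i| ≤ d j)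
    (hdi : d i = 0) (hfc : Summable fun j => f j * c j) (hdc : Summable fun j => -d j * c j) :
    |∑' j, f j * c j| ≤ ∑' j, -d j * c j := by
  have hshift : ∑' j, f j * c j = ∑' j, (f j - f i) * c j := by
    simp_rw [sub_mul]
    rw [hfc.tsum_sub (hc.mul_left (f i)), tsum_mul_left, hc0, mul_zero, sub_zero]
  have hdom : ∀ j, |(f j - f i) * c j| ≤ -d j * c j := by
    intro j
    rcases eq_or_ne j i with rfl | hj
    · simp [hdi]
    · rw [abs_mul, abs_of_nonpos (hneg j hj), neg_mul, ← mul_neg]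
      exact mul_le_mul_of_nonneg_right (hf j) (neg_nonneg.2 (hneg j hj))
  have habs : Summable fun j => |(f j - f i) * c j| :=
    .of_nonneg_of_le (fun _ => abs_nonneg _) hdom hdc
  rw [hshift]
  calc |∑' j, (f j - f i) * c j| ≤ ∑' j, |(f j - f i) * c j| := by
        simpa only [Real.norm_eq_abs] using
          norm_tsum_le_tsum_norm (f := fun j => (f j - f i) * c j) habs
    _ ≤ ∑' j, -d j * c j := habs.tsum_le_tsum hdom hdc

/-- Argmax of the pointwise Stein factor for `d_u`-Lipschitz functions, where
`g_f(i) = Σ_j f(j) g_j(i)` (the series converges absolutely for such `f`):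
under the monotonicity condition,
`sup{|g_f(i+1) − g_f(i)| : f d_u-Lipschitz} = |g_{φ_i}(i+1) − g_{φ_i}(i)|` with
`φ_i = −d_u(i,·)`. -/
theorem argmax_pointwise_stein_factor_lipschitz (a b : ℕ → ℝ)
    (ha : ∀ x : ℕ, 0 < a x) (hb0 : b 0 = 0) (hb : ∀ x : ℕ, 1 ≤ x → 0 < b x)
    (hw : Summable (bdW a b))
    (hmono : ∀ x : ℕ, 0 ≤ a x - a (x + 1) + b (x + 1) - b x)
    (u : ℕ → ℝ) (hu : ∀ x : ℕ, 0 < u x)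
    (du : ℕ → ℕ → ℝ)
    (hdu : ∀ x y : ℕ, du x y = ∑ k ∈ Finset.Ico (min x y) (max x y), u k)
    (i : ℕ) (hi : 1 ≤ i)
    (hsum : Summable fun j : ℕ => du i j * bdPi a b j) :
    (∀ f : ℕ → ℝ, (∀ x : ℕ, |f (x + 1) - f x| ≤ u x) →
      (Summable fun j : ℕ => |f j * gBD a b j i|) ∧
      (Summable fun j : ℕ => |f j * gBD a b j (i + 1)|)) ∧
    IsGreatest
      {M : ℝ | ∃ f : ℕ → ℝ, (∀ x : ℕ, |f (x + 1) - f x| ≤ u x) ∧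
        M = |(∑' j : ℕ, f j * gBD a b j (i + 1)) - ∑' j : ℕ, f j * gBD a b j i|}
      (|(∑' j : ℕ, -du i j * gBD a b j (i + 1)) -
        ∑' j : ℕ, -du i j * gBD a b j i|) := by
  obtain rfl : du = pathDist u := funext₂ hdu
  have hπ0 : ∀ x, 0 ≤ bdPi a b x := fun x => (bdPi_pos ha hb hw x).le
  have hint (f : ℕ → ℝ) (hf : ∀ x, |f (x + 1) - f x| ≤ u x) (m : ℕ) :
      Summable fun j => |f j * gBD a b j m| :=
    summable_abs_mul_gBD hπ0 hw (abs_sub_le_pathDist hf i) hsum m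
  have hφ := abs_neg_pathDist_succ_sub_le (fun x => (hu x).le) i
  refine ⟨fun f hf => ⟨hint f hf i, hint f hf (i + 1)⟩, ⟨_, hφ, rfl⟩, ?_⟩
  rintro _ ⟨f, hf, rfl⟩
  set c : ℕ → ℝ := fun j => gBD a b j (i + 1) - gBD a b j i
  have hdiff (g : ℕ → ℝ) (hg : ∀ x, |g (x + 1) - g x| ≤ u x) :
      Summable (fun j => g j * c j) ∧
        ∑' j, g j * gBD a b j (i + 1) - ∑' j, g j * gBD a b j i = ∑' j, g j * c j := by
    have h1 := (hint g hg (i + 1)).of_abs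
    have h0 := (hint g hg i).of_abs
    simp only [c, mul_sub]
    exact ⟨h1.sub h0, (h1.tsum_sub h0).symm⟩
  have hc1 := summable_gBD hπ0 hw (i + 1)
  have hc2 := summable_gBD hπ0 hw i
  have hc0 : ∑' j, c j = 0 := by
    rw [hc1.tsum_sub hc2, tsum_gBD_eq_zero hb hπ0 hw (by omega), tsum_gBD_eq_zero hb hπ0 hw hi,
      sub_zero]
  have hneg (j : ℕ) (hj : j ≠ i) : c j ≤ 0 :=
    sub_nonpos.2 (gBD_succ_le_gBD ha hb0 hb hw hmono hi hj)
  obtain ⟨hfc, hf_eq⟩ := hdiff f hf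
  obtain ⟨hφc, hφ_eq⟩ := hdiff (fun j => -pathDist u i j) hφ
  rw [hf_eq, hφ_eq]
  exact (abs_tsum_mul_le_of_tsum_eq_zero (hc1.sub hc2) hc0 hneg (abs_sub_le_pathDist hf i)
    (pathDist_self i) hfc hφc).trans (le_abs_self _)
end
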